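/- (Deville's Lemma.) Let (φ_i)_{i∈I} and (ψ_i)_{i∈I} be two pointwise-bounded families of non-negative real-valued convex functions on a real vector space Z. For i ∈ I and positive integers p define θ_{i,p}, θ_p and θ by 2θ_{i,p}(x)^2 = φ_i(x)^2 + p^{-1}ψ_i(x)^2, θ_p(x) = sup_{i∈I} θ_{i,p}(x), and θ(x)^2 = Σ_{p=1}^∞ 2^{-p} θ_p(x)^2. Let x and x_r (r ∈ ℕ) be elements of Z and assume that (1/2)θ(x)^2 + (1/2)θ(x_r)^2 − θ((x+x_r)/2)^2 → 0 as r → ∞. Then there is a sequence (i_r) in I such that φ_{i_r}(x) → sup_{i∈I} φ_i(x) and (1/2)ψ_{i_r}(x)^2 + (1/2)ψ_{i_r}(x_r)^2 − ψ_{i_r}((x+x_r)/2)^2 → 0 as r → ∞. -/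
import Mathlib


open Filter Topology


/-- Two-dimensional Minkowski inequality. -/
lemma mink2 (a b c d : ℝ) :
    Real.sqrt ((a + c) ^ 2 + (b + d) ^ 2) ≤ Real.sqrt (a ^ 2 + b ^ 2) + Real.sqrt (c ^ 2 + d ^ 2) := by
  have h1 : Real.sqrt (a ^ 2 + b ^ 2) * Real.sqrt (c ^ 2 + d ^ 2)
      = Real.sqrt ((a ^ 2 + b ^ 2) * (c ^ 2 + d ^ 2)) := (Real.sqrt_mul (by positivity) _).symm
  have h2 : a * c + b * d ≤ Real.sqrt ((a ^ 2 + b ^ 2) * (c ^ 2 + d ^ 2)) := by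
    rcases le_total (a * c + b * d) 0 with h | h
    · exact h.trans (Real.sqrt_nonneg _)
    · rw [Real.le_sqrt h]
      · nlinarith [sq_nonneg (a * d - b * c)]
      · positivity
  have hs1 : Real.sqrt (a ^ 2 + b ^ 2) ^ 2 = a ^ 2 + b ^ 2 := Real.sq_sqrt (by positivity)
  have hs2 : Real.sqrt (c ^ 2 + d ^ 2) ^ 2 = c ^ 2 + d ^ 2 := Real.sq_sqrt (by positivity)
  have h3 : (a + c) ^ 2 + (b + d) ^ 2
      ≤ (Real.sqrt (a ^ 2 + b ^ 2) + Real.sqrt (c ^ 2 + d ^ 2)) ^ 2 := by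
    nlinarith [h2, h1, Real.sqrt_nonneg (a ^ 2 + b ^ 2), Real.sqrt_nonneg (c ^ 2 + d ^ 2)]
  calc Real.sqrt ((a + c) ^ 2 + (b + d) ^ 2)
      ≤ Real.sqrt ((Real.sqrt (a ^ 2 + b ^ 2) + Real.sqrt (c ^ 2 + d ^ 2)) ^ 2) :=
        Real.sqrt_le_sqrt h3
    _ = _ := Real.sqrt_sq (by positivity)

/-- midpoint inequality for `√((u² + c v²)/2)` type expressions. -/
lemma sqrt_mid (c u v u1 v1 u2 v2 : ℝ) (hc : 0 ≤ c) (hu0 : 0 ≤ u) (hv0 : 0 ≤ v)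
    (hu1 : 0 ≤ u1) (hu2 : 0 ≤ u2) (hv1 : 0 ≤ v1) (hv2 : 0 ≤ v2)
    (hu : u ≤ (u1 + u2) / 2) (hv : v ≤ (v1 + v2) / 2) :
    Real.sqrt ((u ^ 2 + c * v ^ 2) / 2)
      ≤ (Real.sqrt ((u1 ^ 2 + c * v1 ^ 2) / 2) + Real.sqrt ((u2 ^ 2 + c * v2 ^ 2) / 2)) / 2 := by
  set s := Real.sqrt c with hs
  have hsc : s ^ 2 = c := Real.sq_sqrt hc
  have hs0 : 0 ≤ s := Real.sqrt_nonneg c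
  -- rewrite c * w ^ 2 as (s * w) ^ 2
  have key : ∀ w : ℝ, c * w ^ 2 = (s * w) ^ 2 := fun w => by rw [mul_pow, hsc]
  have h1 : Real.sqrt ((u ^ 2 + c * v ^ 2) / 2)
      ≤ Real.sqrt ((((u1 + u2) / 2) ^ 2 + c * ((v1 + v2) / 2) ^ 2) / 2) := by
    apply Real.sqrt_le_sqrt
    have h2 : u ^ 2 ≤ ((u1 + u2) / 2) ^ 2 := by nlinarith
    have h3 : v ^ 2 ≤ ((v1 + v2) / 2) ^ 2 := by nlinarith
    have := mul_le_mul_of_nonneg_left h3 hc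
    linarith
  refine h1.trans ?_
  have e1 : (((u1 + u2) / 2) ^ 2 + c * ((v1 + v2) / 2) ^ 2) / 2
      = ((u1 + u2) ^ 2 + (s * v1 + s * v2) ^ 2) / 8 := by
    rw [key]; ring
  have e2 : ∀ w t : ℝ, (w ^ 2 + c * t ^ 2) / 2 = (w ^ 2 + (s * t) ^ 2) / 2 := fun w t => by
    rw [key]
  rw [e1, e2 u1 v1, e2 u2 v2]
  have e3 : ((u1 + u2) ^ 2 + (s * v1 + s * v2) ^ 2) / 8
      = ((u1 + u2) ^ 2 + (s * v1 + s * v2) ^ 2) * (1 / 8) := by ring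
  have e4 : ∀ w t : ℝ, (w ^ 2 + t ^ 2) / 2 = (w ^ 2 + t ^ 2) * (1 / 2) := fun _ _ => by ring
  rw [e3, e4, e4, Real.sqrt_mul (by positivity), Real.sqrt_mul (by positivity),
    Real.sqrt_mul (by positivity)]
  have h8 : Real.sqrt (1 / 8 : ℝ) = Real.sqrt (1 / 2) / 2 := by
    rw [show (1 / 8 : ℝ) = (1 / 2) * (1 / 4) by norm_num, Real.sqrt_mul (by norm_num),
      show (1 / 4 : ℝ) = (1 / 2) ^ 2 by norm_num, Real.sqrt_sq (by norm_num)]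
    ring
  rw [h8]
  have hm := mink2 u1 (s * v1) u2 (s * v2)
  have hd : (0 : ℝ) ≤ Real.sqrt (1 / 2) := Real.sqrt_nonneg _
  have := mul_le_mul_of_nonneg_right hm hd
  linarith

/-- `θ_{i,p}`, the nonnegative function determined by `2 θ_{i,p}(x)² = φ_i(x)² + p⁻¹ ψ_i(x)²`. -/
noncomputable def thetaIP {Z I : Type*} (φ ψ : I → Z → ℝ) (i : I) (p : ℕ) (x : Z) : ℝ :=
  Real.sqrt ((φ i x ^ 2 + (p : ℝ)⁻¹ * ψ i x ^ 2) / 2)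

/-- `θ_p(x) = sup_{i ∈ I} θ_{i,p}(x)`. -/
noncomputable def thetaP {Z I : Type*} (φ ψ : I → Z → ℝ) (p : ℕ) (x : Z) : ℝ :=
  ⨆ i : I, thetaIP φ ψ i p x

/-- `θ`, the nonnegative function determined by `θ(x)² = Σ_{p=1}^∞ 2^{-p} θ_p(x)²`. -/
noncomputable def theta {Z I : Type*} (φ ψ : I → Z → ℝ) (x : Z) : ℝ :=
  Real.sqrt (∑' p : ℕ, (1 / 2 : ℝ) ^ (p + 1) * thetaP φ ψ (p + 1) x ^ 2)

set_option maxHeartbeats 1000000 in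
/-- Deville's Lemma (Lemma VII.1.1 of Deville–Godefroy–Zizler): if the LUR hypothesis
holds for `θ` at `x` along the sequence `(x_r)`, then there is a sequence `(i_r)` in `I`
with `φ_{i_r}(x) → sup_i φ_i(x)` and the LUR hypothesis holding for `ψ_{i_r}`. -/
theorem deville_lemma {Z I : Type*} [AddCommGroup Z] [Module ℝ Z] [Nonempty I]
    (φ ψ : I → Z → ℝ)
    (hφ0 : ∀ i x, 0 ≤ φ i x) (hψ0 : ∀ i x, 0 ≤ ψ i x)
    (hφconv : ∀ i, ConvexOn ℝ Set.univ (φ i)) (hψconv : ∀ i, ConvexOn ℝ Set.univ (ψ i))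
    (hφbdd : ∀ x : Z, BddAbove (Set.range fun i => φ i x))
    (hψbdd : ∀ x : Z, BddAbove (Set.range fun i => ψ i x))
    (x : Z) (xr : ℕ → Z)
    (hlur : Tendsto (fun r => (1 / 2) * theta φ ψ x ^ 2 + (1 / 2) * theta φ ψ (xr r) ^ 2
        - theta φ ψ ((1 / 2 : ℝ) • (x + xr r)) ^ 2) atTop (nhds 0)) :
    ∃ ir : ℕ → I,
      Tendsto (fun r => φ (ir r) x) atTop (nhds (⨆ i : I, φ i x)) ∧
      Tendsto (fun r => (1 / 2) * ψ (ir r) x ^ 2 + (1 / 2) * ψ (ir r) (xr r) ^ 2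
        - ψ (ir r) ((1 / 2 : ℝ) • (x + xr r)) ^ 2) atTop (nhds 0) := by
  classical
  set m : ℕ → Z := fun r => (1 / 2 : ℝ) • (x + xr r) with hm
  -- inverse of nat cast lies in [0,1]
  have hinv0 : ∀ p : ℕ, (0 : ℝ) ≤ (p : ℝ)⁻¹ := fun p => by positivity
  have hinv1 : ∀ p : ℕ, (p : ℝ)⁻¹ ≤ 1 := by
    intro p
    rcases Nat.eq_zero_or_pos p with h | h
    · simp [h]
    · rw [inv_le_one_iff₀]; right; exact_mod_cast h
  -- basic facts about thetaIP
  have h0 : ∀ i p (z : Z), 0 ≤ thetaIP φ ψ i p z := fun _ _ _ => Real.sqrt_nonneg _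
  have hsq : ∀ i p (z : Z), thetaIP φ ψ i p z ^ 2 = (φ i z ^ 2 + (p : ℝ)⁻¹ * ψ i z ^ 2) / 2 :=
    fun i p z => Real.sq_sqrt (by positivity)
  -- sup bounds
  have hCφ : ∀ (z : Z) i, φ i z ≤ ⨆ i, φ i z := fun z i => le_ciSup (hφbdd z) i
  have hCψ : ∀ (z : Z) i, ψ i z ≤ ⨆ i, ψ i z := fun z i => le_ciSup (hψbdd z) i
  have hIPB : ∀ i p (z : Z),
      thetaIP φ ψ i p z ≤ Real.sqrt (((⨆ i, φ i z) ^ 2 + (⨆ i, ψ i z) ^ 2) / 2) := by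
    intro i p z
    apply Real.sqrt_le_sqrt
    have h1 : φ i z ^ 2 ≤ (⨆ i, φ i z) ^ 2 := by
      have := hCφ z i; nlinarith [hφ0 i z]
    have h2 : (p : ℝ)⁻¹ * ψ i z ^ 2 ≤ (⨆ i, ψ i z) ^ 2 := by
      have h3 : ψ i z ^ 2 ≤ (⨆ i, ψ i z) ^ 2 := by
        have := hCψ z i; nlinarith [hψ0 i z]
      calc (p : ℝ)⁻¹ * ψ i z ^ 2 ≤ 1 * ψ i z ^ 2 := by
            apply mul_le_mul_of_nonneg_right (hinv1 p) (by positivity)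
        _ ≤ (⨆ i, ψ i z) ^ 2 := by linarith
    linarith
  have hbdd : ∀ p (z : Z), BddAbove (Set.range fun i => thetaIP φ ψ i p z) := fun p z =>
    ⟨Real.sqrt (((⨆ i, φ i z) ^ 2 + (⨆ i, ψ i z) ^ 2) / 2), by rintro _ ⟨i, rfl⟩; exact hIPB i p z⟩
  have hle : ∀ i p (z : Z), thetaIP φ ψ i p z ≤ thetaP φ ψ p z :=
    fun i p z => le_ciSup (hbdd p z) i
  have hP0 : ∀ p (z : Z), 0 ≤ thetaP φ ψ p z :=
    fun p z => (h0 (Classical.arbitrary I) p z).trans (hle _ p z)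
  have hPB : ∀ p (z : Z),
      thetaP φ ψ p z ≤ Real.sqrt (((⨆ i, φ i z) ^ 2 + (⨆ i, ψ i z) ^ 2) / 2) := by
    intro p z
    exact ciSup_le fun i => hIPB i p z
  -- midpoint inequalities from convexity
  have hφmid : ∀ i r, φ i (m r) ≤ (φ i x + φ i (xr r)) / 2 := by
    intro i r
    have := (hφconv i).2 (Set.mem_univ x) (Set.mem_univ (xr r))
      (by norm_num : (0:ℝ) ≤ 1/2) (by norm_num : (0:ℝ) ≤ 1/2) (by norm_num)
    have hmr : m r = (1/2 : ℝ) • x + (1/2 : ℝ) • xr r := by rw [hm]; simp [smul_add]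
    rw [hmr]; simp only [smul_eq_mul] at this; linarith
  have hψmid : ∀ i r, ψ i (m r) ≤ (ψ i x + ψ i (xr r)) / 2 := by
    intro i r
    have := (hψconv i).2 (Set.mem_univ x) (Set.mem_univ (xr r))
      (by norm_num : (0:ℝ) ≤ 1/2) (by norm_num : (0:ℝ) ≤ 1/2) (by norm_num)
    have hmr : m r = (1/2 : ℝ) • x + (1/2 : ℝ) • xr r := by rw [hm]; simp [smul_add]
    rw [hmr]; simp only [smul_eq_mul] at this; linarith
  have hIPmid : ∀ i p r,
      thetaIP φ ψ i p (m r) ≤ (thetaIP φ ψ i p x + thetaIP φ ψ i p (xr r)) / 2 := by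
    intro i p r
    exact sqrt_mid _ _ _ _ _ _ _ (hinv0 p) (hφ0 i _) (hψ0 i _) (hφ0 i _) (hφ0 i _)
      (hψ0 i _) (hψ0 i _) (hφmid i r) (hψmid i r)
  have hPmid : ∀ p r, thetaP φ ψ p (m r) ≤ (thetaP φ ψ p x + thetaP φ ψ p (xr r)) / 2 := by
    intro p r
    apply ciSup_le
    intro i
    refine (hIPmid i p r).trans ?_
    have := hle i p x; have := hle i p (xr r); linarith
  -- summability
  have hsummable : ∀ z : Z, Summable (fun p : ℕ => (1/2 : ℝ) ^ (p+1) * thetaP φ ψ (p+1) z ^ 2) := by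
    intro z
    refine Summable.of_nonneg_of_le (fun p => by positivity) (fun p => ?_)
      (((summable_geometric_of_lt_one (by norm_num) (by norm_num)).mul_left
        (((⨆ i, φ i z) ^ 2 + (⨆ i, ψ i z) ^ 2) / 2)) : Summable
          (fun p : ℕ => (((⨆ i, φ i z) ^ 2 + (⨆ i, ψ i z) ^ 2) / 2) * (1/2 : ℝ) ^ p))
    · 
      have h1 : thetaP φ ψ (p+1) z ^ 2 ≤ ((⨆ i, φ i z) ^ 2 + (⨆ i, ψ i z) ^ 2) / 2 := by
        have h2 := hPB (p+1) z
        have h3 := hP0 (p+1) z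
        have h4 := Real.sq_sqrt (show (0:ℝ) ≤ ((⨆ i, φ i z) ^ 2 + (⨆ i, ψ i z) ^ 2) / 2 by
          nlinarith [hφ0 (Classical.arbitrary I) z, hψ0 (Classical.arbitrary I) z,
            hCφ z (Classical.arbitrary I), hCψ z (Classical.arbitrary I)])
        nlinarith
      have h5 : (0:ℝ) ≤ (1/2 : ℝ) ^ p := by positivity
      calc (1/2 : ℝ) ^ (p+1) * thetaP φ ψ (p+1) z ^ 2
          ≤ (1/2 : ℝ) ^ p * (((⨆ i, φ i z) ^ 2 + (⨆ i, ψ i z) ^ 2) / 2) := by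
            rw [pow_succ]
            have := hP0 (p+1) z
            nlinarith
        _ = _ := by ring
  have hth : ∀ z : Z, theta φ ψ z ^ 2 = ∑' p : ℕ, (1/2 : ℝ) ^ (p+1) * thetaP φ ψ (p+1) z ^ 2 :=
    fun z => Real.sq_sqrt (tsum_nonneg fun p => by positivity)
  -- δ p r and e r
  set dl : ℕ → ℕ → ℝ := fun p r => (1/2) * thetaP φ ψ p x ^ 2 + (1/2) * thetaP φ ψ p (xr r) ^ 2
    - thetaP φ ψ p (m r) ^ 2 with hdl
  set e : ℕ → ℝ := fun r => (1/2) * theta φ ψ x ^ 2 + (1/2) * theta φ ψ (xr r) ^ 2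
    - theta φ ψ (m r) ^ 2 with he_def
  have hlur' : Tendsto e atTop (nhds 0) := hlur
  have hdl0 : ∀ p r, 0 ≤ dl p r := by
    intro p r
    have h1 := hPmid p r
    have h2 := hP0 p (m r)
    have h3 := hP0 p x
    have h4 := hP0 p (xr r)
    simp only [hdl]
    nlinarith [sq_nonneg (thetaP φ ψ p x - thetaP φ ψ p (xr r))]
  have hSdl : ∀ r, Summable (fun p : ℕ => (1/2 : ℝ) ^ (p+1) * dl (p+1) r) := by
    intro r
    have : (fun p : ℕ => (1/2 : ℝ) ^ (p+1) * dl (p+1) r)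
        = fun p : ℕ => ((1/2) * ((1/2 : ℝ) ^ (p+1) * thetaP φ ψ (p+1) x ^ 2)
          + (1/2) * ((1/2 : ℝ) ^ (p+1) * thetaP φ ψ (p+1) (xr r) ^ 2))
          - (1/2 : ℝ) ^ (p+1) * thetaP φ ψ (p+1) (m r) ^ 2 := by
      funext p; simp only [hdl]; ring
    rw [this]
    exact (((hsummable x).mul_left _).add ((hsummable (xr r)).mul_left _)).sub (hsummable (m r))
  have he : ∀ r, e r = ∑' p : ℕ, (1/2 : ℝ) ^ (p+1) * dl (p+1) r := by
    intro r
    have h1 : ∑' p : ℕ, (1/2 : ℝ) ^ (p+1) * dl (p+1) r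
        = (∑' p : ℕ, ((1/2) * ((1/2 : ℝ) ^ (p+1) * thetaP φ ψ (p+1) x ^ 2)
            + (1/2) * ((1/2 : ℝ) ^ (p+1) * thetaP φ ψ (p+1) (xr r) ^ 2)))
          - ∑' p : ℕ, (1/2 : ℝ) ^ (p+1) * thetaP φ ψ (p+1) (m r) ^ 2 := by
      rw [← Summable.tsum_sub (((hsummable x).mul_left _).add ((hsummable (xr r)).mul_left _))
        (hsummable (m r))]
      congr 1; funext p; simp only [hdl]; ring
    rw [h1, Summable.tsum_add ((hsummable x).mul_left _) ((hsummable (xr r)).mul_left _),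
      tsum_mul_left, tsum_mul_left]
    simp only [he_def, hth]
  have hdlle : ∀ p r, dl (p+1) r ≤ 2 ^ (p+1) * e r := by
    intro p r
    have h1 : (1/2 : ℝ) ^ (p+1) * dl (p+1) r ≤ e r := by
      rw [he r]
      exact Summable.le_tsum (hSdl r) p (fun q _ => mul_nonneg (by positivity) (hdl0 (q+1) r))
    have h2 : (0:ℝ) < (1/2 : ℝ) ^ (p+1) := by positivity
    rw [show (2:ℝ) ^ (p+1) = ((1/2 : ℝ) ^ (p+1))⁻¹ by rw [← inv_pow]; norm_num]
    have h3 := mul_le_mul_of_nonneg_left h1 (inv_nonneg.mpr h2.le)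
    rwa [← mul_assoc, inv_mul_cancel₀ h2.ne', one_mul] at h3
  have he0 : ∀ r, 0 ≤ e r := by
    intro r
    rw [he r]
    exact tsum_nonneg fun p => mul_nonneg (by positivity) (hdl0 (p+1) r)
  -- choice of near-supremum indices at the midpoints
  have hchoice : ∀ p r : ℕ, ∃ i : I,
      thetaP φ ψ p (m r) ^ 2 - 1/((r:ℝ)+1) ≤ thetaIP φ ψ i p (m r) ^ 2 := by
    intro p r
    by_cases h : thetaP φ ψ p (m r) ^ 2 ≤ 1/((r:ℝ)+1)
    · exact ⟨Classical.arbitrary I, by nlinarith [sq_nonneg (thetaIP φ ψ (Classical.arbitrary I) p (m r))]⟩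
    · push_neg at h
      set t := Real.sqrt (thetaP φ ψ p (m r) ^ 2 - 1/((r:ℝ)+1)) with htdef
      have ht2 : t ^ 2 = thetaP φ ψ p (m r) ^ 2 - 1/((r:ℝ)+1) := Real.sq_sqrt (by linarith)
      have ht0 : 0 ≤ t := Real.sqrt_nonneg _
      have htlt : t < thetaP φ ψ p (m r) := by
        by_contra hcon
        push_neg at hcon
        have h5 : thetaP φ ψ p (m r) ^ 2 ≤ t ^ 2 := pow_le_pow_left₀ (hP0 p (m r)) hcon 2
        have h6 : (0:ℝ) < 1/((r:ℝ)+1) := by positivity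
        linarith
      obtain ⟨i, hi⟩ := exists_lt_of_lt_ciSup htlt
      refine ⟨i, ?_⟩
      have := pow_le_pow_left₀ ht0 hi.le 2
      linarith
  choose j hj using hchoice
  -- notation
  set S : ℝ := ⨆ i, φ i x with hS
  set D : ℝ := ⨆ i, ψ i x with hD
  have hS0 : 0 ≤ S := (hφ0 (Classical.arbitrary I) x).trans (hCφ x _)
  have hD0 : 0 ≤ D := (hψ0 (Classical.arbitrary I) x).trans (hCψ x _)
  set Aq : ℕ → ℕ → ℝ := fun p r => (1/2) * ψ (j p r) x ^ 2 + (1/2) * ψ (j p r) (xr r) ^ 2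
    - ψ (j p r) (m r) ^ 2 with hAq
  -- squared comparisons
  have hsqle : ∀ i p (z : Z), thetaIP φ ψ i p z ^ 2 ≤ thetaP φ ψ p z ^ 2 := by
    intro i p z
    have h1 := hle i p z; have h2 := h0 i p z
    nlinarith
  have hmid2 : ∀ i p r, thetaIP φ ψ i p (m r) ^ 2
      ≤ (1/2) * thetaIP φ ψ i p x ^ 2 + (1/2) * thetaIP φ ψ i p (xr r) ^ 2 := by
    intro i p r
    have h1 := hIPmid i p r
    have h2 := h0 i p (m r); have h3 := h0 i p x; have h4 := h0 i p (xr r)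
    nlinarith [sq_nonneg (thetaIP φ ψ i p x - thetaIP φ ψ i p (xr r))]
  -- the key estimates for the chosen index
  have hkey : ∀ p r, (1/2) * thetaIP φ ψ (j p r) p x ^ 2
      + (1/2) * thetaIP φ ψ (j p r) p (xr r) ^ 2 - thetaIP φ ψ (j p r) p (m r) ^ 2
      ≤ dl p r + 1/((r:ℝ)+1) := by
    intro p r
    have h1 := hj p r
    have h2 := hsqle (j p r) p x
    have h3 := hsqle (j p r) p (xr r)
    simp only [hdl]
    linarith
  have hθx : ∀ p r, thetaP φ ψ p x ^ 2 - 2 * (dl p r + 1/((r:ℝ)+1))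
      ≤ thetaIP φ ψ (j p r) p x ^ 2 := by
    intro p r
    have h1 := hj p r
    have h2 := hmid2 (j p r) p r
    have h3 := hsqle (j p r) p (xr r)
    simp only [hdl] at *
    linarith
  -- ψ quantity bounds
  have hA0 : ∀ p r, 0 ≤ Aq p r := by
    intro p r
    have h1 := hψmid (j p r) r
    have h2 := hψ0 (j p r) (m r); have h3 := hψ0 (j p r) x; have h4 := hψ0 (j p r) (xr r)
    simp only [hAq]
    nlinarith [sq_nonneg (ψ (j p r) x - ψ (j p r) (xr r))]
  have hB0 : ∀ p r, 0 ≤ (1/2) * φ (j p r) x ^ 2 + (1/2) * φ (j p r) (xr r) ^ 2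
      - φ (j p r) (m r) ^ 2 := by
    intro p r
    have h1 := hφmid (j p r) r
    have h2 := hφ0 (j p r) (m r); have h3 := hφ0 (j p r) x; have h4 := hφ0 (j p r) (xr r)
    nlinarith [sq_nonneg (φ (j p r) x - φ (j p r) (xr r))]
  have hABid : ∀ p r, (1/2) * thetaIP φ ψ (j p r) p x ^ 2
      + (1/2) * thetaIP φ ψ (j p r) p (xr r) ^ 2 - thetaIP φ ψ (j p r) p (m r) ^ 2
      = (1/2) * (((1/2) * φ (j p r) x ^ 2 + (1/2) * φ (j p r) (xr r) ^ 2
          - φ (j p r) (m r) ^ 2) + (p:ℝ)⁻¹ * Aq p r) := by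
    intro p r
    rw [hsq, hsq, hsq]
    simp only [hAq]
    ring
  have hAinv : ∀ (p r : ℕ), (p:ℝ)⁻¹ * Aq p r ≤ 2 * (dl p r + 1/((r:ℝ)+1)) := by
    intro p r
    have h1 := hkey p r
    have h2 := hABid p r
    have h3 := hB0 p r
    linarith
  have hAle : ∀ p r, Aq (p+1) r ≤ 2 * ((p:ℝ)+1) * (dl (p+1) r + 1/((r:ℝ)+1)) := by
    intro p r
    have hp : (0:ℝ) < ((p:ℕ)+1 : ℕ) := by positivity
    have h1 := hAinv (p+1) r
    have h2 := mul_le_mul_of_nonneg_left h1 (le_of_lt (show (0:ℝ) < ((p+1 : ℕ):ℝ) by exact_mod_cast Nat.succ_pos p))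
    rw [← mul_assoc, mul_inv_cancel₀ (show ((p+1 : ℕ):ℝ) ≠ 0 by positivity), one_mul] at h2
    calc Aq (p+1) r ≤ ((p+1 : ℕ):ℝ) * (2 * (dl (p+1) r + 1/((r:ℝ)+1))) := h2
      _ = 2 * ((p:ℝ)+1) * (dl (p+1) r + 1/((r:ℝ)+1)) := by push_cast; ring
  -- lower bound for φ at x
  have hS2 : ∀ p, S ^ 2 ≤ 2 * thetaP φ ψ p x ^ 2 := by
    intro p
    have hle2 : S ≤ Real.sqrt (2 * thetaP φ ψ p x ^ 2) := by
      apply ciSup_le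
      intro i
      have h1 : φ i x ^ 2 ≤ 2 * thetaP φ ψ p x ^ 2 := by
        have h2 := hsq i p x
        have h3 := hsqle i p x
        nlinarith [mul_nonneg (hinv0 p) (sq_nonneg (ψ i x))]
      calc φ i x = Real.sqrt (φ i x ^ 2) := (Real.sqrt_sq (hφ0 i x)).symm
        _ ≤ _ := Real.sqrt_le_sqrt h1
    have := pow_le_pow_left₀ hS0 hle2 2
    rwa [Real.sq_sqrt (by positivity)] at this
  have hφx2 : ∀ p r, S ^ 2 - (4 * (dl p r + 1/((r:ℝ)+1)) + (p:ℝ)⁻¹ * D ^ 2)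
      ≤ φ (j p r) x ^ 2 := by
    intro p r
    have h1 := hθx p r
    have h2 := hsq (j p r) p x
    have h3 : ψ (j p r) x ^ 2 ≤ D ^ 2 := by
      have := hCψ x (j p r); have := hψ0 (j p r) x; nlinarith
    have h4 : (p:ℝ)⁻¹ * ψ (j p r) x ^ 2 ≤ (p:ℝ)⁻¹ * D ^ 2 :=
      mul_le_mul_of_nonneg_left h3 (hinv0 p)
    have h5 := hS2 p
    linarith
  have hφxle : ∀ p r, φ (j p r) x ≤ S := fun p r => hCφ x (j p r)
  -- per-p convergence to 0
  have hγ : ∀ p : ℕ, Tendsto (fun r : ℕ => 2 * ((p:ℝ)+1) * (dl (p+1) r + 1/((r:ℝ)+1)))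
      atTop (nhds 0) := by
    intro p
    have h1 : Tendsto (fun r : ℕ => dl (p+1) r) atTop (nhds 0) := by
      apply squeeze_zero (fun r => hdl0 (p+1) r) (fun r => hdlle p r)
      have h := hlur'.const_mul ((2:ℝ) ^ (p+1))
      simpa only [mul_zero] using h
    have h2 : Tendsto (fun r : ℕ => 1/((r:ℝ)+1)) atTop (nhds 0) :=
      tendsto_one_div_add_atTop_nhds_zero_nat
    have h3 := (h1.add h2).const_mul (2 * ((p:ℝ)+1))
    simpa only [add_zero, mul_zero] using h3
  have hN : ∀ p : ℕ, ∃ N : ℕ, ∀ r ≥ N,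
      2 * ((p:ℝ)+1) * (dl (p+1) r + 1/((r:ℝ)+1)) ≤ 1/((p:ℝ)+1) := by
    intro p
    have h1 : (0:ℝ) < 1/((p:ℝ)+1) := by positivity
    exact eventually_atTop.mp ((hγ p).eventually (eventually_le_nhds h1))
  choose N hNs using hN
  set M : ℕ → ℕ := fun p => (Finset.range (p+1)).sup N + p with hM
  have hMN : ∀ p, N p ≤ M p := fun p =>
    (Finset.le_sup (Finset.self_mem_range_succ p)).trans (Nat.le_add_right _ _)
  have hMp : ∀ p, p ≤ M p := fun p => Nat.le_add_left p _
  set n : ℕ → ℕ := fun r => sSup {p | M p ≤ r} with hn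
  have hbddn : ∀ r, BddAbove {p | M p ≤ r} := fun r =>
    ⟨r, fun q hq => le_trans (hMp q) hq⟩
  have hmem : ∀ r, M 0 ≤ r → M (n r) ≤ r := fun r h =>
    Nat.sSup_mem (⟨0, h⟩ : {p : ℕ | M p ≤ r}.Nonempty) (hbddn r)
  have hge : ∀ p r, M p ≤ r → p ≤ n r := fun p r h => le_csSup (hbddn r) h
  have hninf : Tendsto n atTop atTop :=
    tendsto_atTop.mpr fun p => eventually_atTop.mpr ⟨M p, fun r hr => hge p r hr⟩
  have hinvn : Tendsto (fun r : ℕ => 1/(((n r):ℝ)+1)) atTop (nhds 0) :=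
    tendsto_one_div_add_atTop_nhds_zero_nat.comp hninf
  -- the eventual bound from the diagonal choice
  have hdiag : ∀ r, M 0 ≤ r →
      2 * (((n r):ℝ)+1) * (dl (n r + 1) r + 1/((r:ℝ)+1)) ≤ 1/(((n r):ℝ)+1) := by
    intro r hr
    exact hNs (n r) r ((hMN (n r)).trans (hmem r hr))
  clear_value dl e n M S D
  refine ⟨fun r => j (n r + 1) r, ?_, ?_⟩
  · -- φ convergence
    have hg : Tendsto (fun r : ℕ => 4 * (dl (n r + 1) r + 1/((r:ℝ)+1))
        + ((n r + 1 : ℕ):ℝ)⁻¹ * D ^ 2) atTop (nhds 0) := by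
      apply squeeze_zero' (g := fun r : ℕ => (2 + D ^ 2) * (1/(((n r):ℝ)+1)))
      · filter_upwards [] with r
        have h1 := hdl0 (n r + 1) r
        have h2 : (0:ℝ) < 1/((r:ℝ)+1) := by positivity
        have h3 : (0:ℝ) ≤ ((n r + 1 : ℕ):ℝ)⁻¹ := by positivity
        have h4 := mul_nonneg h3 (sq_nonneg D)
        show (0:ℝ) ≤ 4 * (dl (n r + 1) r + 1/((r:ℝ)+1)) + ((n r + 1 : ℕ):ℝ)⁻¹ * D ^ 2
        linarith
      · filter_upwards [eventually_atTop.mpr ⟨M 0, fun r hr => hr⟩] with r hr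
        have h1 := hdiag r hr
        have h2 := hdl0 (n r + 1) r
        have h3 : (0:ℝ) < 1/((r:ℝ)+1) := by positivity
        have h4 : (1:ℝ) ≤ ((n r):ℝ) + 1 := by
          have := Nat.cast_nonneg (α := ℝ) (n r); linarith
        have h5 : 4 * (dl (n r + 1) r + 1/((r:ℝ)+1))
            ≤ 2 * (2 * (((n r):ℝ)+1) * (dl (n r + 1) r + 1/((r:ℝ)+1))) := by
          nlinarith [mul_nonneg (show (0:ℝ) ≤ ((n r):ℝ) from Nat.cast_nonneg _)
            (show (0:ℝ) ≤ dl (n r + 1) r + 1/((r:ℝ)+1) by linarith)]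
        have h6 : ((n r + 1 : ℕ):ℝ)⁻¹ * D ^ 2 = D ^ 2 * (1/(((n r):ℝ)+1)) := by
          push_cast; field_simp
        rw [h6]
        have h7 : 2 * (1/(((n r):ℝ)+1)) + D ^ 2 * (1/(((n r):ℝ)+1))
            = (2 + D ^ 2) * (1/(((n r):ℝ)+1)) := by ring
        linarith [h1, h7.le]
      · have := hinvn.const_mul (2 + D ^ 2)
        simpa using this
    have hlow : Tendsto (fun r : ℕ => S ^ 2 - (4 * (dl (n r + 1) r + 1/((r:ℝ)+1))
        + ((n r + 1 : ℕ):ℝ)⁻¹ * D ^ 2)) atTop (nhds (S ^ 2)) := by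
      have := (tendsto_const_nhds (x := S ^ 2) (f := atTop (α := ℕ))).sub hg
      simpa using this
    have hsq_t : Tendsto (fun r => φ (j (n r + 1) r) x ^ 2) atTop (nhds (S ^ 2)) := by
      apply tendsto_of_tendsto_of_tendsto_of_le_of_le' hlow tendsto_const_nhds
      · filter_upwards [] with r
        exact hφx2 (n r + 1) r
      · filter_upwards [] with r
        have h1 := hφxle (n r + 1) r
        have h2 := hφ0 (j (n r + 1) r) x
        nlinarith
    have hsqrt := (Real.continuous_sqrt.tendsto _).comp hsq_t
    have heq : (fun r => Real.sqrt (φ (j (n r + 1) r) x ^ 2))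
        = fun r => φ (j (n r + 1) r) x := funext fun r => Real.sqrt_sq (hφ0 _ _)
    have heq2 : Real.sqrt (S ^ 2) = S := Real.sqrt_sq hS0
    have h9 : Tendsto (fun r => Real.sqrt (φ (j (n r + 1) r) x ^ 2)) atTop (nhds S) := by
      rw [← heq2]; exact hsqrt
    rw [heq] at h9
    exact h9
  · -- ψ convergence
    show Tendsto (fun r => Aq (n r + 1) r) atTop (nhds 0)
    apply squeeze_zero' (g := fun r : ℕ => 1/(((n r):ℝ)+1))
    · filter_upwards [] with r
      exact hA0 (n r + 1) r
    · filter_upwards [eventually_atTop.mpr ⟨M 0, fun r hr => hr⟩] with r hr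
      have h1 := hdiag r hr
      have h2 := hAle (n r) r
      linarith
    · exact hinvn
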